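/- Assume γ < ω₁, X ⊆ T_{γ+1} is finite with unique drop-downs to γ, {f_τ : τ ∈ I} is a countable indexed family of automorphisms of T↾(γ+1), and A ⊆ I is finite. Then there exists an indexed family {g_τ : τ ∈ I} of automorphisms of T↾(γ+2) such that: (1) f_τ ⊆ g_τ for all τ ∈ I; (2) for all τ ∈ A, X↾γ and X are g_τ-consistent; and (3) if {f_τ : τ ∈ A} is separated on X↾γ, then {g_τ : τ ∈ I} is separated. -/

import Mathlib

noncomputable section

/-- The ordinal `ω₁`. -/
def omega1 : Ordinal := (Cardinal.aleph 1).ord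

/-- A normal, infinitely splitting `ω₁`-tree structure on the partial order `α`.
`height x` is the height of `x` (the order type of its set of strict predecessors,
which is linearly ordered by `pred_linear`), and `restrict x β` is the unique node
of height `β` below `x` (for `β ≤ height x`). -/
structure OmegaOneTree (α : Type) [PartialOrder α] where
  height : α → Ordinal
  restrict : α → Ordinal → α
  height_lt_omega1 : ∀ x : α, height x < omega1
  height_strictMono : ∀ {x y : α}, x < y → height x < height y
  pred_linear : ∀ {x y z : α}, y < x → z < x → y ≤ z ∨ z ≤ y
  restrict_le : ∀ (x : α) {β : Ordinal}, β ≤ height x → restrict x β ≤ x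
  height_restrict : ∀ (x : α) {β : Ordinal}, β ≤ height x → height (restrict x β) = β
  restrict_eq : ∀ {x y : α} {β : Ordinal}, y ≤ x → height y = β → restrict x β = y
  level_nonempty : ∀ β : Ordinal, β < omega1 → ∃ x : α, height x = β
  level_countable : ∀ β : Ordinal, {x : α | height x = β}.Countable
  root_exists : ∃ r : α, height r = 0 ∧ ∀ x : α, r ≤ x
  splitting : ∀ x : α, {y : α | x < y ∧ height y = height x + 1}.Infinite
  exists_above : ∀ (x : α) {β : Ordinal}, height x < β → β < omega1 →
    ∃ y : α, x < y ∧ height y = β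
  limit_eq : ∀ {x y : α}, height x = height y → Order.IsSuccLimit (height x) →
    (∀ z : α, z < x ↔ z < y) → x = y

variable {α : Type} [PartialOrder α]

/-- The pair `(g, g')` is an automorphism of `T↾(β+1)` together with its inverse:
both are level preserving on `T↾(β+1)`, mutually inverse there, and strictly
increasing there (hence `g` is an order isomorphism of `T↾(β+1)` onto itself). -/
def IsTreeAuto (T : OmegaOneTree α) (β : Ordinal) (g g' : α → α) : Prop :=
  (∀ x : α, T.height x ≤ β → T.height (g x) = T.height x) ∧
  (∀ x : α, T.height x ≤ β → T.height (g' x) = T.height x) ∧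
  (∀ x : α, T.height x ≤ β → g' (g x) = x) ∧
  (∀ x : α, T.height x ≤ β → g (g' x) = x) ∧
  (∀ x y : α, T.height y ≤ β → x < y → g x < g y) ∧
  (∀ x y : α, T.height y ≤ β → x < y → g' x < g' y)

/-- `(g, g')` extends `(f, f')` on `T↾(γ+1)` (i.e. `f ⊆ g` for automorphisms). -/
def AutoExtends (T : OmegaOneTree α) (γ : Ordinal) (f f' g g' : α → α) : Prop :=
  (∀ x : α, T.height x ≤ γ → g x = f x) ∧ (∀ x : α, T.height x ≤ γ → g' x = f' x)

/-- `X↾lo` and `X` are `g`-consistent: for all `x, y ∈ X`,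
`g(x↾lo) = y↾lo` iff `g(x) = y`. -/
def AutoConsistentSet (T : OmegaOneTree α) (g : α → α) (lo : Ordinal) (X : Set α) : Prop :=
  ∀ x ∈ X, ∀ y ∈ X, (g (T.restrict x lo) = T.restrict y lo ↔ g x = y)

/-- The tuples `a` and `b` (with `a = b↾lo` componentwise) are `g`-consistent:
for all `i, j`, `g(a i) = a j` iff `g(b i) = b j`. -/
def AutoConsistentPair (g : α → α) {n : ℕ} (a b : Fin n → α) : Prop :=
  ∀ i j : Fin n, (g (a i) = a j ↔ g (b i) = b j)

/-- The indexed family of automorphisms `(g, g')` is separated on the injective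
tuple `a`: no member of the tuple satisfies a relation with itself, and each
member satisfies at most one relation `g_τ^m(a k) = a i` with earlier members. -/
def AutoSepTuple {ι : Type} (g g' : ι → α → α) {n : ℕ} (a : Fin n → α) : Prop :=
  (∀ (k : Fin n) (τ : ι), g τ (a k) ≠ a k) ∧
  ∀ (k i₁ i₂ : Fin n) (m₁ m₂ : Bool) (τ₁ τ₂ : ι), i₁ < k → i₂ < k →
    cond m₁ (g τ₁ (a k)) (g' τ₁ (a k)) = a i₁ →
    cond m₂ (g τ₂ (a k)) (g' τ₂ (a k)) = a i₂ →
    i₁ = i₂ ∧ m₁ = m₂ ∧ τ₁ = τ₂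

/-- The indexed family of automorphisms `(g, g')` is separated on the finite set
`X`: some injective tuple listing the elements of `X` witnesses separation. -/
def AutoSepSet {ι : Type} (g g' : ι → α → α) (X : Set α) : Prop :=
  ∃ (n : ℕ) (a : Fin n → α), Function.Injective a ∧ Set.range a = X ∧ AutoSepTuple g g' a

/-- The indexed family of automorphisms `(g, g')` of `T↾(β+1)` is separated:
it is separated on every finite subset of the level `T_β`. -/
def AutoSeparated (T : OmegaOneTree α) (β : Ordinal) {ι : Type} (g g' : ι → α → α) : Prop :=
  ∀ X : Set α, X.Finite → (∀ x ∈ X, T.height x = β) → AutoSepSet g g' X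

/-!
Every fiber of `T_{γ+1}` over a node `u ∈ T_γ` is countably infinite, so it can be given
coordinates in the free group `F` on `Option ι` (the extra generator keeps `F` infinite when `ι`
is empty). Extend `f_τ` by sending the node with coordinate `w` over `u` to the node with coordinate
`τ · w` over `f_τ u`. Sorting a finite subset of `T_{γ+1}` by coordinate length, a node can only be
sent to an earlier one by cancelling the first letter of its coordinate, and that letter determines
the automorphism and the exponent: the extended family is separated. If `{f_τ : τ ∈ A}` is separated
on `X↾γ`, the nodes of `X↾γ` can be labelled by words so that `f_τ (x↾γ) = y↾γ` forces
`τ · label x = label y`; choosing coordinates that give `X` these labels yields consistency.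
Otherwise the multipliers `1` and constant coordinates on `X` give consistency trivially.
-/

theorem Ordinal.le_add_one_cases {β γ : Ordinal} (h : β ≤ γ + 1) : β ≤ γ ∨ β = γ + 1 :=
  h.lt_or_eq.imp_left Order.lt_add_one_iff.1

theorem exists_equiv_eqOn_of_subsingleton {S G : Type} (e : S ≃ G) {P : Set S}
    (hP : P.Subsingleton) (m : S → G) : ∃ e' : S ≃ G, ∀ a ∈ P, e' a = m a := by
  classical
  rcases hP.eq_empty_or_singleton with rfl | ⟨a, rfl⟩
  · exact ⟨e, by simp⟩
  · exact ⟨e.trans (Equiv.swap (e a) (m a)), by simp⟩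

theorem Set.Countable.exists_inverse_eqOn_of_infinite {β : Type} {S P : Set β} (hS : S.Countable)
    (hS' : S.Infinite) (hP : (S ∩ P).Subsingleton) {G : Type} [Countable G] [Infinite G]
    (m : β → G) : ∃ (c : β → G) (p : G → β),
      (∀ x ∈ S, p (c x) = x) ∧ (∀ q, p q ∈ S ∧ c (p q) = q) ∧ ∀ x ∈ S ∩ P, c x = m x := by
  classical
  have := hS.to_subtype
  have := hS'.to_subtype
  obtain ⟨e, he⟩ := exists_equiv_eqOn_of_subsingleton nonempty_equiv_of_countable.some
    (P := {a : S | a.1 ∈ P}) (fun a ha b hb => Subtype.ext (hP ⟨a.2, ha⟩ ⟨b.2, hb⟩))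
    (fun a => m a)
  refine ⟨fun x => if hx : x ∈ S then e ⟨x, hx⟩ else m x, fun q => (e.symm q).1,
    fun x hx => by simp [hx], fun q => ⟨(e.symm q).2, by simp⟩, fun x hx => ?_⟩
  simp [hx.1, he ⟨x, hx.1⟩ hx.2]

theorem Set.Finite.exists_enum_monotone {β : Type} {Y : Set β} (hY : Y.Finite) (key : β → ℕ) :
    ∃ (n : ℕ) (a : Fin n → β), Function.Injective a ∧ Set.range a = Y ∧ Monotone (key ∘ a) := by
  obtain ⟨n, b, rfl⟩ := hY.fin_embedding
  exact ⟨n, b ∘ Tuple.sort (key ∘ b), b.injective.comp (Tuple.sort _).injective,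
    EquivLike.range_comp _ _, Tuple.monotone_sort (key ∘ b)⟩

namespace FreeGroup

variable {β : Type}

theorem mk_singleton_false (b : β) : mk [(b, false)] = (of b)⁻¹ := by
  simp [of, inv_mk, invRev]

variable [DecidableEq β]

theorem toWord_head?_of_norm_mk_mul_le (b : β) (m : Bool) {w : FreeGroup β}
    (h : (mk [(b, m)] * w).norm ≤ w.norm) : w.toWord.head? = some (b, !m) := by
  rw [← mk_toWord (x := w), mul_mk, norm, toWord_mk, List.singleton_append, reduce.cons,
    reduce_toWord, mk_toWord] at h
  rcases hw : w.toWord with _ | ⟨a, l⟩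
  · simp [norm, hw] at h
  · rw [hw] at h
    by_cases hc : b = a.1 ∧ m = !a.2
    · simp [hc.1, hc.2]
    · simp [hc, norm, hw] at h

end FreeGroup

section Labels

open FreeGroup

variable {β κ : Type} (g g' : κ → β → β) {n : ℕ} (b : Fin n → β)

open Classical in
/-- On a separated tuple the triple `(i, m, τ)` with `i < k` and `g_τ^m (b k) = b i` is unique when
it exists, so these labels satisfy `τ^m · label k = label i`. -/
def sepLabel (k : Fin n) : FreeGroup κ :=
  if h : ∃ p : Fin n × Bool × κ, p.1 < k ∧ cond p.2.1 (g p.2.2 (b k)) (g' p.2.2 (b k)) = b p.1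
  then (mk [(h.choose.2.2, h.choose.2.1)])⁻¹ * sepLabel h.choose.1 else 1
termination_by k.val
decreasing_by exact h.choose_spec.1

variable {g g' b}

theorem mk_mul_sepLabel (hsep : AutoSepTuple g g' b) {i k : Fin n} {m : Bool} {τ : κ}
    (hik : i < k) (h : cond m (g τ (b k)) (g' τ (b k)) = b i) :
    mk [(τ, m)] * sepLabel g g' b k = sepLabel g g' b i := by
  have hex : ∃ p : Fin n × Bool × κ, p.1 < k ∧
      cond p.2.1 (g p.2.2 (b k)) (g' p.2.2 (b k)) = b p.1 := ⟨(i, m, τ), hik, h⟩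
  obtain ⟨hi, hm, hτ⟩ := hsep.2 k _ i _ m _ τ hex.choose_spec.1 hik hex.choose_spec.2 h
  rw [sepLabel, dif_pos hex, hi, hm, hτ, mul_inv_cancel_left]

theorem of_mul_sepLabel (hsep : AutoSepTuple g g' b) (hinv : ∀ τ k, g' τ (g τ (b k)) = b k)
    {i k : Fin n} {τ : κ} (h : g τ (b i) = b k) : of τ * sepLabel g g' b i = sepLabel g g' b k := by
  rcases lt_trichotomy i k with hik | rfl | hki
  · have hk : g' τ (b k) = b i := h ▸ hinv τ i
    rw [← mk_mul_sepLabel hsep hik (m := false) hk, mk_singleton_false, mul_inv_cancel_left]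
  · exact absurd h (hsep.1 i τ)
  · exact mk_mul_sepLabel hsep hki (m := true) h

theorem AutoSepSet.exists_labels {Y : Set β} (hsep : AutoSepSet g g' Y)
    (hinv : ∀ τ, ∀ y ∈ Y, g' τ (g τ y) = y) :
    ∃ v : β → FreeGroup κ, ∀ τ, ∀ y ∈ Y, ∀ z ∈ Y, g τ y = z → of τ * v y = v z := by
  obtain ⟨n, b, hb, rfl, hsep⟩ := hsep
  refine ⟨Function.extend b (sepLabel g g' b) 1, ?_⟩
  rintro τ _ ⟨i, rfl⟩ _ ⟨k, rfl⟩ h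
  rw [hb.extend_apply, hb.extend_apply]
  exact of_mul_sepLabel hsep (fun τ k => hinv τ _ ⟨k, rfl⟩) h

end Labels

namespace OmegaOneTree

variable (T : OmegaOneTree α)

theorem restrict_lt {x : α} {β : Ordinal} (h : β < T.height x) : T.restrict x β < x := by
  refine (T.restrict_le x h.le).lt_of_ne fun heq => h.ne ?_
  rw [← T.height_restrict x h.le, heq]

theorem le_restrict_of_lt {x y : α} {β : Ordinal} (hxy : x < y) (hx : T.height x ≤ β)
    (hy : β < T.height y) : x ≤ T.restrict y β := by
  rcases T.pred_linear hxy (T.restrict_lt hy) with h | h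
  · exact h
  rcases h.lt_or_eq with h | h
  · have := T.height_strictMono h
    rw [T.height_restrict y hy.le] at this
    exact absurd hx this.not_ge
  · exact h.ge

theorem height_restrict_of_eq_add_one {x : α} {γ : Ordinal} (hx : T.height x = γ + 1) :
    T.height (T.restrict x γ) = γ :=
  T.height_restrict x (hx ▸ le_self_add)

theorem infinite_succFiber {γ : Ordinal} {u : α} (hu : T.height u = γ) :
    {x | T.height x = γ + 1 ∧ T.restrict x γ = u}.Infinite := by
  convert T.splitting u using 1
  ext x
  constructor
  · rintro ⟨hx, rfl⟩
    exact ⟨T.restrict_lt (hx ▸ lt_add_one γ), hx.trans (by rw [hu])⟩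
  · rintro ⟨hux, hx⟩
    exact ⟨hu ▸ hx, T.restrict_eq hux.le hu⟩

end OmegaOneTree

section

variable (T : OmegaOneTree α) (γ : Ordinal)

def IsSuccLift (f g : α → α) : Prop :=
  (∀ x, T.height x ≤ γ → g x = f x) ∧
    ∀ x, T.height x = γ + 1 → T.height (g x) = γ + 1 ∧ T.restrict (g x) γ = f (T.restrict x γ)

namespace IsSuccLift

variable {T γ} {f g : α → α}

theorem height_apply (hg : IsSuccLift T γ f g)
    (hf : ∀ x, T.height x ≤ γ → T.height (f x) = T.height x) {x : α}
    (hx : T.height x ≤ γ + 1) : T.height (g x) = T.height x := by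
  rcases Ordinal.le_add_one_cases hx with hx | hx
  · rw [hg.1 x hx, hf x hx]
  · rw [(hg.2 x hx).1, hx]

theorem apply_lt_apply (hg : IsSuccLift T γ f g)
    (hf_lt : ∀ x y, T.height y ≤ γ → x < y → f x < f y) {x y : α} (hy : T.height y ≤ γ + 1)
    (hxy : x < y) : g x < g y := by
  rcases Ordinal.le_add_one_cases hy with hy | hy
  · rw [hg.1 x ((T.height_strictMono hxy).le.trans hy), hg.1 y hy]
    exact hf_lt x y hy hxy
  have hx : T.height x ≤ γ := Order.lt_add_one_iff.1 (hy ▸ T.height_strictMono hxy)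
  have hu : T.height (T.restrict y γ) ≤ γ := (T.height_restrict_of_eq_add_one hy).le
  obtain ⟨hgy, hgy_restrict⟩ := hg.2 y hy
  calc g x = f x := hg.1 x hx
    _ ≤ f (T.restrict y γ) := by
      rcases (T.le_restrict_of_lt hxy hx (hy ▸ lt_add_one γ)).lt_or_eq with h | h
      · exact (hf_lt _ _ hu h).le
      · rw [h]
    _ = T.restrict (g y) γ := hgy_restrict.symm
    _ < g y := T.restrict_lt (hgy ▸ lt_add_one γ)

end IsSuccLift

namespace IsTreeAuto

variable {T γ} {f f' : α → α}

theorem symm (hf : IsTreeAuto T γ f f') : IsTreeAuto T γ f' f :=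
  ⟨hf.2.1, hf.1, hf.2.2.2.1, hf.2.2.1, hf.2.2.2.2.2, hf.2.2.2.2.1⟩

theorem height_apply (hf : IsTreeAuto T γ f f') {u : α}
    (hu : T.height u = γ) : T.height (f u) = γ :=
  hu ▸ hf.1 u hu.le

theorem succ {g g' : α → α} (hf : IsTreeAuto T γ f f')
    (hg : IsSuccLift T γ f g) (hg' : IsSuccLift T γ f' g')
    (hinv : ∀ x, T.height x = γ + 1 → g' (g x) = x)
    (hinv' : ∀ x, T.height x = γ + 1 → g (g' x) = x) :
    IsTreeAuto T (γ + 1) g g' := by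
  obtain ⟨hf₁, hf₂, hf₃, hf₄, hf₅, hf₆⟩ := hf
  refine ⟨fun x => hg.height_apply hf₁, fun x => hg'.height_apply hf₂, fun x hx => ?_,
    fun x hx => ?_, fun x y => hg.apply_lt_apply hf₅, fun x y => hg'.apply_lt_apply hf₆⟩
  · rcases Ordinal.le_add_one_cases hx with hx | hx
    · rw [hg.1 x hx, hg'.1 _ ((hf₁ x hx).trans_le hx), hf₃ x hx]
    · exact hinv x hx
  · rcases Ordinal.le_add_one_cases hx with hx | hx
    · rw [hg'.1 x hx, hg.1 _ ((hf₂ x hx).trans_le hx), hf₄ x hx]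
    · exact hinv' x hx

end IsTreeAuto

structure LevelCoords (G : Type) where
  coord : α → G
  point : α → G → α
  point_coord : ∀ x, T.height x = γ + 1 → point (T.restrict x γ) (coord x) = x
  height_point : ∀ u q, T.height u = γ → T.height (point u q) = γ + 1
  restrict_point : ∀ u q, T.height u = γ → T.restrict (point u q) γ = u
  coord_point : ∀ u q, T.height u = γ → coord (point u q) = q

theorem exists_levelCoords {G : Type} [Countable G] [Infinite G] (X : Set α)
    (hXlev : ∀ x ∈ X, T.height x = γ + 1) (hXdrop : Set.InjOn (fun x => T.restrict x γ) X)
    (m : α → G) : ∃ C : LevelCoords T γ G, ∀ x ∈ X, C.coord x = m x := by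
  have fiber_coords : ∀ u, ∃ cp : (α → G) × (G → α), T.height u = γ →
      (∀ x, T.height x = γ + 1 → T.restrict x γ = u → cp.2 (cp.1 x) = x) ∧
      (∀ q, T.height (cp.2 q) = γ + 1 ∧ T.restrict (cp.2 q) γ = u ∧ cp.1 (cp.2 q) = q) ∧
      (∀ x ∈ X, T.restrict x γ = u → cp.1 x = m x) := by
    intro u
    by_cases hu : T.height u = γ
    · obtain ⟨c, p, hpc, hcp, hm⟩ :=
        ((T.level_countable (γ + 1)).mono fun x hx => hx.1).exists_inverse_eqOn_of_infinite
          (T.infinite_succFiber hu) (fun x hx y hy => hXdrop hx.2 hy.2 (hx.1.2.trans hy.1.2.symm)) m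
      exact ⟨(c, p), fun _ => ⟨fun x hx hxu => hpc x ⟨hx, hxu⟩,
        fun q => ⟨(hcp q).1.1, (hcp q).1.2, (hcp q).2⟩,
        fun x hx hxu => hm x ⟨⟨hXlev x hx, hxu⟩, hx⟩⟩⟩
    · exact ⟨(m, fun _ => u), fun h => absurd h hu⟩
  choose cp hcp using fiber_coords
  refine ⟨⟨fun x => (cp (T.restrict x γ)).1 x, fun u q => (cp u).2 q, fun x hx => ?_,
      fun u q hu => ((hcp u hu).2.1 q).1, fun u q hu => ((hcp u hu).2.1 q).2.1,
      fun u q hu => ?_⟩, fun x hx => ?_⟩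
  · exact (hcp _ (T.height_restrict_of_eq_add_one hx)).1 x hx rfl
  · show (cp (T.restrict _ γ)).1 _ = q
    rw [((hcp u hu).2.1 q).2.1]
    exact ((hcp u hu).2.1 q).2.2
  · exact (hcp _ (T.height_restrict_of_eq_add_one (hXlev x hx))).2.2 x hx rfl

namespace LevelCoords

variable {T γ}

section GroupCoords

variable {G : Type} [Group G] (C : LevelCoords T γ G)

def lift (f : α → α) (c : G) (x : α) : α :=
  if T.height x = γ + 1 then C.point (f (T.restrict x γ)) (c * C.coord x) else f x

theorem lift_of_height_le (f : α → α) (c : G) {x : α} (hx : T.height x ≤ γ) :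
    C.lift f c x = f x :=
  if_neg (hx.trans_lt (lt_add_one γ)).ne

theorem isSuccLift_lift {f : α → α} (hf : ∀ u, T.height u = γ → T.height (f u) = γ) (c : G) :
    IsSuccLift T γ f (C.lift f c) := by
  refine ⟨fun x => C.lift_of_height_le f c, fun x hx => ?_⟩
  have hu := hf _ (T.height_restrict_of_eq_add_one hx)
  rw [lift, if_pos hx]
  exact ⟨C.height_point _ _ hu, C.restrict_point _ _ hu⟩

theorem coord_lift {f : α → α} (hf : ∀ u, T.height u = γ → T.height (f u) = γ) (c : G)
    {x : α} (hx : T.height x = γ + 1) :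
    C.coord (C.lift f c x) = c * C.coord x := by
  rw [lift, if_pos hx, C.coord_point _ _ (hf _ (T.height_restrict_of_eq_add_one hx))]

theorem lift_eq_iff {f : α → α} (hf : ∀ u, T.height u = γ → T.height (f u) = γ) (c : G)
    {x y : α} (hx : T.height x = γ + 1) (hy : T.height y = γ + 1) :
    C.lift f c x = y ↔ f (T.restrict x γ) = T.restrict y γ ∧ c * C.coord x = C.coord y := by
  constructor
  · rintro rfl
    exact ⟨((C.isSuccLift_lift hf c).2 x hx).2.symm, (C.coord_lift hf c hx).symm⟩
  · rintro ⟨hu, hq⟩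
    rw [lift, if_pos hx, hu, hq, C.point_coord y hy]

theorem lift_lift {f : α → α} (hf : ∀ u, T.height u = γ → T.height (f u) = γ) {f' : α → α}
    (hf' : ∀ u, T.height u = γ → f' (f u) = u) (c c' : G)
    (hc : c' * c = 1) {x : α} (hx : T.height x = γ + 1) :
    C.lift f' c' (C.lift f c x) = x := by
  obtain ⟨hgx, hgx_restrict⟩ := (C.isSuccLift_lift hf c).2 x hx
  rw [lift, if_pos hgx, hgx_restrict, hf' _ (T.height_restrict_of_eq_add_one hx),
    C.coord_lift hf c hx, ← mul_assoc, hc, one_mul, C.point_coord x hx]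

theorem autoExtends_lift (f f' : α → α) (c : G) :
    AutoExtends T γ f f' (C.lift f c) (C.lift f' c⁻¹) :=
  ⟨fun _ => C.lift_of_height_le f c, fun _ => C.lift_of_height_le f' c⁻¹⟩

theorem isTreeAuto_lift {f f' : α → α} (hf : IsTreeAuto T γ f f') (c : G) :
    IsTreeAuto T (γ + 1) (C.lift f c) (C.lift f' c⁻¹) :=
  hf.succ (C.isSuccLift_lift (fun _ => hf.height_apply) c)
    (C.isSuccLift_lift (fun _ => hf.symm.height_apply) c⁻¹)
    (fun _ => C.lift_lift (fun _ => hf.height_apply) (fun u hu => hf.2.2.1 u hu.le) c c⁻¹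
      (inv_mul_cancel c))
    (fun _ => C.lift_lift (fun _ => hf.symm.height_apply) (fun u hu => hf.2.2.2.1 u hu.le) c⁻¹ c
      (mul_inv_cancel c))

theorem autoConsistentSet_lift {f : α → α} (hf : ∀ u, T.height u = γ → T.height (f u) = γ)
    {X : Set α} (hXlev : ∀ x ∈ X, T.height x = γ + 1) {c : G}
    (hc : ∀ x ∈ X, ∀ y ∈ X, f (T.restrict x γ) = T.restrict y γ → c * C.coord x = C.coord y) :
    AutoConsistentSet T (C.lift f c) γ X := by
  intro x hx y hy
  rw [C.lift_of_height_le f c (T.height_restrict_of_eq_add_one (hXlev x hx)).le,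
    C.lift_eq_iff hf c (hXlev x hx) (hXlev y hy)]
  exact ⟨fun h => ⟨h, hc x hx y hy h⟩, And.left⟩

end GroupCoords

section FreeCoords

open FreeGroup

variable {β : Type} (C : LevelCoords T γ (FreeGroup β))

theorem autoSeparated_lift {ι : Type} {f f' : ι → α → α}
    (hf : ∀ τ u, T.height u = γ → T.height (f τ u) = γ)
    (hf' : ∀ τ u, T.height u = γ → T.height (f' τ u) = γ) {e : ι → β}
    (he : Function.Injective e) :
    AutoSeparated T (γ + 1) (fun τ => C.lift (f τ) (of (e τ)))
      (fun τ => C.lift (f' τ) (of (e τ))⁻¹) := by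
  classical
  intro Y hY hYlev
  obtain ⟨n, a, ha, rfl, hmono⟩ := hY.exists_enum_monotone fun y => (C.coord y).norm
  have hlev : ∀ k, T.height (a k) = γ + 1 := fun k => hYlev _ ⟨k, rfl⟩
  have coord_cond : ∀ k τ m, C.coord (cond m (C.lift (f τ) (of (e τ)) (a k))
      (C.lift (f' τ) (of (e τ))⁻¹ (a k))) = FreeGroup.mk [(e τ, m)] * C.coord (a k) := by
    intro k τ m
    cases m
    · rw [cond_false, C.coord_lift (hf' τ) _ (hlev k), mk_singleton_false]
    · rw [cond_true, C.coord_lift (hf τ) _ (hlev k)]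
      rfl
  refine ⟨n, a, ha, rfl, fun k τ hfix => ?_, fun k i₁ i₂ m₁ m₂ τ₁ τ₂ hi₁ hi₂ h₁ h₂ => ?_⟩
  · have := C.coord_lift (hf τ) (of (e τ)) (hlev k)
    rw [show C.lift (f τ) (of (e τ)) (a k) = a k from hfix] at this
    exact of_ne_one _ (mul_eq_right.1 this.symm)
  have head : ∀ i m τ, i < k → cond m (C.lift (f τ) (of (e τ)) (a k))
      (C.lift (f' τ) (of (e τ))⁻¹ (a k)) = a i →
      (C.coord (a k)).toWord.head? = some (e τ, !m) := by
    intro i m τ hi h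
    apply toWord_head?_of_norm_mk_mul_le
    rw [← coord_cond, h]
    exact hmono hi.le
  obtain ⟨hτ, hm⟩ : e τ₁ = e τ₂ ∧ m₁ = m₂ := by
    simpa using (head _ _ _ hi₁ h₁).symm.trans (head _ _ _ hi₂ h₂)
  obtain rfl := he hτ
  subst hm
  exact ⟨ha (h₁.symm.trans h₂), rfl, rfl⟩

end FreeCoords

end LevelCoords

end

theorem auto_family_one_step_extension_general
    (T : OmegaOneTree α) (γ : Ordinal)
    (X : Set α) (hXlev : ∀ x ∈ X, T.height x = γ + 1)
    (hXdrop : Set.InjOn (fun x => T.restrict x γ) X)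
    {ι : Type} [Countable ι] (f f' : ι → α → α)
    (hf : ∀ τ, IsTreeAuto T γ (f τ) (f' τ))
    (A : Set ι) :
    ∃ g g' : ι → α → α,
      (∀ τ, IsTreeAuto T (γ + 1) (g τ) (g' τ)) ∧
      (∀ τ, AutoExtends T γ (f τ) (f' τ) (g τ) (g' τ)) ∧
      (∀ τ ∈ A, AutoConsistentSet T (g τ) γ X) ∧
      (AutoSepSet (fun τ : ↥A => f τ.1) (fun τ : ↥A => f' τ.1)
          ((fun x => T.restrict x γ) '' X) →
        AutoSeparated T (γ + 1) g g') := by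
  have hlev τ u (hu : T.height u = γ) : T.height (f τ u) = γ := (hf τ).height_apply hu
  have hlev' τ u (hu : T.height u = γ) : T.height (f' τ u) = γ := (hf τ).symm.height_apply hu
  by_cases hsep : AutoSepSet (fun τ : ↥A => f τ.1) (fun τ : ↥A => f' τ.1)
      ((fun x => T.restrict x γ) '' X)
  · obtain ⟨v, hv⟩ := hsep.exists_labels <| by
      rintro τ _ ⟨x, hx, rfl⟩
      exact (hf τ).2.2.1 _ (T.height_restrict_of_eq_add_one (hXlev x hx)).le
    obtain ⟨C, hC⟩ := exists_levelCoords T γ X hXlev hXdrop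
      fun x => FreeGroup.map (fun τ : A => some τ.1) (v (T.restrict x γ))
    refine ⟨fun τ => C.lift (f τ) (FreeGroup.of (some τ)),
      fun τ => C.lift (f' τ) (FreeGroup.of (some τ))⁻¹,
      fun τ => C.isTreeAuto_lift (hf τ) _, fun τ => C.autoExtends_lift _ _ _, fun τ hτ => ?_,
      fun _ => C.autoSeparated_lift hlev hlev' (Option.some_injective ι)⟩
    refine C.autoConsistentSet_lift (hlev τ) hXlev fun x hx y hy hxy => ?_
    rw [hC x hx, hC y hy, ← hv ⟨τ, hτ⟩ _ ⟨x, hx, rfl⟩ _ ⟨y, hy, rfl⟩ hxy, map_mul,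
      FreeGroup.map.of]
  · obtain ⟨C, hC⟩ := exists_levelCoords T γ X hXlev hXdrop fun _ => (1 : FreeGroup (Option ι))
    refine ⟨fun τ => C.lift (f τ) 1, fun τ => C.lift (f' τ) 1⁻¹,
      fun τ => C.isTreeAuto_lift (hf τ) _, fun τ => C.autoExtends_lift _ _ _, fun τ _ => ?_,
      (absurd · hsep)⟩
    exact C.autoConsistentSet_lift (hlev τ) hXlev fun x hx y hy _ => by
      rw [hC x hx, hC y hy, one_mul]

/-- Lemma 5.14: one-step extension of a countable family of automorphisms,
consistent on a prescribed finite set `X ⊆ T_{γ+1}`, which is separated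
provided the subfamily indexed by `A` was separated on `X↾γ`. -/
theorem auto_family_one_step_extension
    (T : OmegaOneTree α) (γ : Ordinal) (hγ : γ < omega1)
    (X : Set α) (hXfin : X.Finite) (hXlev : ∀ x ∈ X, T.height x = γ + 1)
    (hXdrop : Set.InjOn (fun x => T.restrict x γ) X)
    {ι : Type} [Countable ι] (f f' : ι → α → α)
    (hf : ∀ τ, IsTreeAuto T γ (f τ) (f' τ))
    (A : Set ι) (hAfin : A.Finite) :
    ∃ g g' : ι → α → α,
      (∀ τ, IsTreeAuto T (γ + 1) (g τ) (g' τ)) ∧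
      (∀ τ, AutoExtends T γ (f τ) (f' τ) (g τ) (g' τ)) ∧
      (∀ τ ∈ A, AutoConsistentSet T (g τ) γ X) ∧
      (AutoSepSet (fun τ : ↥A => f τ.1) (fun τ : ↥A => f' τ.1)
          ((fun x => T.restrict x γ) '' X) →
        AutoSeparated T (γ + 1) g g') :=
  auto_family_one_step_extension_general T γ X hXlev hXdrop f f' hf A
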